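/- Suppose that for a sequence of measurable parameter sets A_n ∈ B_{Θ_n} and a sequence of positive constants r_n one has lim_{n→∞} P( π_n^{post}(A_n^c | X_n) ≤ r_n ) = 1. Then for any positive sequences b_n and c_n satisfying b_n c_n ≥ r_n for all n, there exist measurable sets B_n, C_n ∈ B_{Θ_n} such that (A1) A_n ∪ B_n ∪ C_n = Θ_n, (A2) M_n(χ_n, B_n)/M_n(χ_n, Θ_n) ≤ b_n, and (A3) there exist S_n ∈ B_n with lim_n G^n(S_n) = 0 and sup_{θ∈C_n} Q_n(S_n^c|θ)/Q_n(χ_n|θ) ≤ c_n. -/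

import Mathlib

open MeasureTheory ENNReal Filter

noncomputable section

variable {χ Θ : ℕ → Type*} [∀ n, MeasurableSpace (χ n)] [∀ n, MeasurableSpace (Θ n)]

/-- `Q_n(S|θ) = ∫_S exp(q_n(x|θ)) λ^n(dx)`. -/
def Qfun (lam : ∀ n, Measure (χ n)) (q : ∀ n, χ n → Θ n → ℝ) (n : ℕ)
    (S : Set (χ n)) (θ : Θ n) : ℝ≥0∞ :=
  ∫⁻ x in S, ENNReal.ofReal (Real.exp (q n x θ)) ∂(lam n)

/-- `M_n(S, A) = ∫_A Q_n(S|θ) π_n(dθ)`. -/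
def Mfun (lam : ∀ n, Measure (χ n)) (prior : ∀ n, Measure (Θ n))
    (q : ∀ n, χ n → Θ n → ℝ) (n : ℕ) (S : Set (χ n)) (A : Set (Θ n)) : ℝ≥0∞ :=
  ∫⁻ θ in A, Qfun lam q n S θ ∂(prior n)

/-- The `R^(α)`-posterior probability of `A` given `x`. -/
def rpost (prior : ∀ n, Measure (Θ n)) (q : ∀ n, χ n → Θ n → ℝ) (n : ℕ)
    (A : Set (Θ n)) (x : χ n) : ℝ≥0∞ :=
  (∫⁻ θ in A, ENNReal.ofReal (Real.exp (q n x θ)) ∂(prior n)) /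
    (∫⁻ θ, ENNReal.ofReal (Real.exp (q n x θ)) ∂(prior n))

/-- The `R^(α)`-marginal density `m_n(x)`. -/
def rmarg (lam : ∀ n, Measure (χ n)) (prior : ∀ n, Measure (Θ n))
    (q : ∀ n, χ n → Θ n → ℝ) (n : ℕ) (x : χ n) : ℝ≥0∞ :=
  (∫⁻ θ, ENNReal.ofReal (Real.exp (q n x θ)) ∂(prior n)) /
    Mfun lam prior q n Set.univ Set.univ

/-!
Reject when the posterior mass of `A_nᶜ` exceeds `r_n`: `S_n = {x | r_n < π_n^{post}(A_nᶜ | x)}`,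
an event of vanishing `G^n`-probability by hypothesis. Let `C_n` be the set where the test has
type II error at most `c_n`, and `B_n = A_nᶜ ∩ C_nᶜ`. On `B_n` we have
`c_n Q_n(χ_n|θ) ≤ Q_n(S_nᶜ|θ)`, and by Tonelli
`M_n(S_nᶜ, A_nᶜ) = ∫_{S_nᶜ} ∫_{A_nᶜ} e^{q_n} dπ_n dλ^n ≤ r_n M_n(χ_n, Θ_n)`, since off `S_n` the inner
integral is at most `r_n ∫ e^{q_n} dπ_n`. Hence
`c_n M_n(χ_n, B_n) ≤ M_n(S_nᶜ, B_n) ≤ r_n M_n(χ_n, Θ_n) ≤ b_n c_n M_n(χ_n, Θ_n)`.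
-/

open Set

theorem tendsto_measure_compl_nhds_zero {Ω ι : Type*} [MeasurableSpace Ω] {μ : Measure Ω}
    [IsProbabilityMeasure μ] {l : Filter ι} {E : ι → Set Ω} (hE : ∀ i, MeasurableSet (E i))
    (h : Tendsto (fun i => μ (E i)) l (nhds 1)) : Tendsto (fun i => μ (E i)ᶜ) l (nhds 0) := by
  simp_rw [prob_compl_eq_one_sub (hE _)]
  simpa using ENNReal.Tendsto.sub tendsto_const_nhds h (Or.inl one_ne_top)

section

variable {lam : ∀ n, Measure (χ n)} {prior : ∀ n, Measure (Θ n)} {q : ∀ n, χ n → Θ n → ℝ}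
  {n : ℕ}

theorem Mfun_mono {S S' : Set (χ n)} {A A' : Set (Θ n)} (hS : S ⊆ S') (hA : A ⊆ A') :
    Mfun lam prior q n S A ≤ Mfun lam prior q n S' A' :=
  (lintegral_mono_set hA).trans (lintegral_mono fun _ => lintegral_mono_set hS)

theorem measurable_ofReal_exp (hq : Measurable fun z : χ n × Θ n => q n z.1 z.2) :
    Measurable fun z : χ n × Θ n => ENNReal.ofReal (Real.exp (q n z.1 z.2)) :=
  (Real.measurable_exp.comp hq).ennreal_ofReal

theorem measurable_Qfun [SFinite (lam n)] (hq : Measurable fun z : χ n × Θ n => q n z.1 z.2)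
    (S : Set (χ n)) : Measurable (Qfun lam q n S) :=
  (measurable_ofReal_exp hq).lintegral_prod_left'

theorem measurable_rpost [SFinite (prior n)]
    (hq : Measurable fun z : χ n × Θ n => q n z.1 z.2) (A : Set (Θ n)) :
    Measurable (rpost prior q n A) :=
  (measurable_ofReal_exp hq).lintegral_prod_right'.div
    (measurable_ofReal_exp hq).lintegral_prod_right'

theorem Mfun_eq_lintegral_lintegral [SFinite (lam n)] [SFinite (prior n)]
    (hq : Measurable fun z : χ n × Θ n => q n z.1 z.2) (S : Set (χ n)) (A : Set (Θ n)) :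
    Mfun lam prior q n S A =
      ∫⁻ x in S, ∫⁻ θ in A, ENNReal.ofReal (Real.exp (q n x θ)) ∂prior n ∂lam n :=
  lintegral_lintegral_swap ((measurable_ofReal_exp hq).comp measurable_swap).aemeasurable

theorem Mfun_le_mul_of_rpost_le [SFinite (lam n)] [SFinite (prior n)]
    (hq : Measurable fun z : χ n × Θ n => q n z.1 z.2) {T : Set (χ n)} (hT : MeasurableSet T)
    {A : Set (Θ n)} {ε : ℝ≥0∞} (hε₀ : ε ≠ 0) (hε : ε ≠ ∞)
    (hpost : ∀ x ∈ T, rpost prior q n A x ≤ ε) :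
    Mfun lam prior q n T A ≤ ε * Mfun lam prior q n T univ := by
  rw [Mfun_eq_lintegral_lintegral hq, Mfun_eq_lintegral_lintegral hq, Measure.restrict_univ,
    ← lintegral_const_mul' _ _ hε]
  exact setLIntegral_mono' hT fun x hx => (ENNReal.div_le_iff_le_mul (Or.inr hε) (Or.inr hε₀)).mp (hpost x hx)

theorem mul_Mfun_le_of_le_Qfun_div {T : Set (χ n)} {B : Set (Θ n)} (hB : MeasurableSet B)
    {c : ℝ≥0∞} (hc : c ≠ ∞) (h : ∀ θ ∈ B, c ≤ Qfun lam q n T θ / Qfun lam q n univ θ) :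
    c * Mfun lam prior q n univ B ≤ Mfun lam prior q n T B := by
  rw [Mfun, Mfun, ← lintegral_const_mul' _ _ hc]
  exact setLIntegral_mono' hB fun θ hθ => ENNReal.mul_le_of_le_div (h θ hθ)

theorem Mfun_univ_div_le_of_rpost_le [SFinite (lam n)] [SFinite (prior n)]
    (hq : Measurable fun z : χ n × Θ n => q n z.1 z.2) {T : Set (χ n)} (hT : MeasurableSet T)
    {A B : Set (Θ n)} (hB : MeasurableSet B) (hBA : B ⊆ Aᶜ) {r b c : ℝ≥0∞}
    (hr₀ : r ≠ 0) (hr : r ≠ ∞) (hc₀ : c ≠ 0) (hc : c ≠ ∞) (hrbc : r ≤ b * c)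
    (hpost : ∀ x ∈ T, rpost prior q n Aᶜ x ≤ r)
    (hratio : ∀ θ ∈ B, c ≤ Qfun lam q n T θ / Qfun lam q n univ θ) :
    Mfun lam prior q n univ B / Mfun lam prior q n univ univ ≤ b := by
  refine ENNReal.div_le_of_le_mul ((ENNReal.mul_le_mul_iff_right hc₀ hc).mp ?_)
  calc c * Mfun lam prior q n univ B
      ≤ Mfun lam prior q n T B := mul_Mfun_le_of_le_Qfun_div hB hc hratio
    _ ≤ Mfun lam prior q n T Aᶜ := Mfun_mono subset_rfl hBA
    _ ≤ r * Mfun lam prior q n T univ := Mfun_le_mul_of_rpost_le hq hT hr₀ hr hpost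
    _ ≤ b * c * Mfun lam prior q n univ univ :=
        mul_le_mul' hrbc (Mfun_mono (subset_univ T) subset_rfl)
    _ = c * (b * Mfun lam prior q n univ univ) := by ring

end

theorem stmt_2_general
    {Ω : Type*} [MeasurableSpace Ω] (P : Measure Ω) [IsProbabilityMeasure P]
    {χ Θ : ℕ → Type*} [∀ n, MeasurableSpace (χ n)] [∀ n, MeasurableSpace (Θ n)]
    (lam : ∀ n, Measure (χ n)) [∀ n, SigmaFinite (lam n)]
    (X : ∀ n, Ω → χ n) (hX : ∀ n, Measurable (X n))
    (prior : ∀ n, Measure (Θ n)) (hprior : ∀ n, prior n Set.univ ≤ 1)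
    (q : ∀ n, χ n → Θ n → ℝ)
    (hq : ∀ n, Measurable (fun z : χ n × Θ n => q n z.1 z.2))
    (A : ∀ n, Set (Θ n)) (hAmeas : ∀ n, MeasurableSet (A n))
    (r : ℕ → ℝ) (hr : ∀ n, 0 < r n)
    (hconv : Tendsto (fun n => P {ω | rpost prior q n (A n)ᶜ (X n ω)
      ≤ ENNReal.ofReal (r n)}) atTop (nhds 1)) :
    ∀ b c : ℕ → ℝ, (∀ n, 0 < b n) → (∀ n, 0 < c n) → (∀ n, r n ≤ b n * c n) →
      ∃ B C : ∀ n, Set (Θ n), (∀ n, MeasurableSet (B n)) ∧ (∀ n, MeasurableSet (C n)) ∧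
        -- (A1)
        (∀ n, A n ∪ B n ∪ C n = Set.univ) ∧
        -- (A2)
        (∀ n, Mfun lam prior q n Set.univ (B n) / Mfun lam prior q n Set.univ Set.univ
          ≤ ENNReal.ofReal (b n)) ∧
        -- (A3)
        (∃ S : ∀ n, Set (χ n), (∀ n, MeasurableSet (S n)) ∧
          Tendsto (fun n => P.map (X n) (S n)) atTop (nhds 0) ∧
          ∀ n, ∀ θ ∈ C n,
            Qfun lam q n (S n)ᶜ θ / Qfun lam q n Set.univ θ ≤ ENNReal.ofReal (c n)) := by
  intro b c hb hc hbc
  have (n : ℕ) : IsFiniteMeasure (prior n) := ⟨(hprior n).trans_lt one_lt_top⟩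
  let S n : Set (χ n) := {x | ENNReal.ofReal (r n) < rpost prior q n (A n)ᶜ x}
  let C n : Set (Θ n) :=
    {θ | Qfun lam q n (S n)ᶜ θ / Qfun lam q n univ θ ≤ ENNReal.ofReal (c n)}
  have hS n : MeasurableSet (S n) := measurableSet_lt measurable_const (measurable_rpost (hq n) _)
  have hC n : MeasurableSet (C n) :=
    measurableSet_le ((measurable_Qfun (hq n) _).div (measurable_Qfun (hq n) _)) measurable_const
  refine ⟨fun n => (A n)ᶜ ∩ (C n)ᶜ, C, fun n => (hAmeas n).compl.inter (hC n).compl, hC,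
    fun n => ?_, fun n => ?_, S, hS, ?_, fun n θ hθ => hθ⟩
  · ext θ
    by_cases θ ∈ A n <;> by_cases θ ∈ C n <;> simp_all
  · exact Mfun_univ_div_le_of_rpost_le (hq n) (hS n).compl ((hAmeas n).compl.inter (hC n).compl)
      inter_subset_left (ofReal_pos.mpr (hr n)).ne' ofReal_ne_top (ofReal_pos.mpr (hc n)).ne'
      ofReal_ne_top ((ofReal_le_ofReal (hbc n)).trans_eq (ofReal_mul (hb n).le))
      (fun x hx => not_lt.mp hx) (fun θ hθ => (not_le.mp (show θ ∉ C n from hθ.2)).le)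
  · have hE n : MeasurableSet {ω | rpost prior q n (A n)ᶜ (X n ω) ≤ ENNReal.ofReal (r n)} :=
      measurableSet_le ((measurable_rpost (hq n) _).comp (hX n)) measurable_const
    refine (tendsto_measure_compl_nhds_zero hE hconv).congr fun n => ?_
    rw [Measure.map_apply (hX n) (hS n)]
    congr 1
    ext ω
    simp [S]

/-- Lemma: necessity part, in-probability form. -/
theorem stmt_2
    {Ω : Type*} [MeasurableSpace Ω] (P : Measure Ω) [IsProbabilityMeasure P]
    {χ Θ : ℕ → Type*} [∀ n, MeasurableSpace (χ n)] [∀ n, MeasurableSpace (Θ n)]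
    (lam : ∀ n, Measure (χ n)) [∀ n, SigmaFinite (lam n)]
    (X : ∀ n, Ω → χ n) (hX : ∀ n, Measurable (X n))
    (g : ∀ n, χ n → ℝ≥0∞) (hgmeas : ∀ n, Measurable (g n))
    (hlaw : ∀ n, P.map (X n) = (lam n).withDensity (g n))
    (prior : ∀ n, Measure (Θ n)) (hprior : ∀ n, prior n Set.univ ≤ 1)
    (q : ∀ n, χ n → Θ n → ℝ)
    (hq : ∀ n, Measurable (fun z : χ n × Θ n => q n z.1 z.2))
    (hM : ∀ n, 0 < Mfun lam prior q n Set.univ Set.univ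
      ∧ Mfun lam prior q n Set.univ Set.univ < ⊤)
    -- measurability of θ ↦ Q_n(S|θ)/Q_n(χ_n|θ)
    (hQmeas : ∀ n (S : Set (χ n)), MeasurableSet S →
      Measurable (fun θ => Qfun lam q n S θ / Qfun lam q n Set.univ θ))
    (A : ∀ n, Set (Θ n)) (hAmeas : ∀ n, MeasurableSet (A n))
    (r : ℕ → ℝ) (hr : ∀ n, 0 < r n)
    (hconv : Tendsto (fun n => P {ω | rpost prior q n (A n)ᶜ (X n ω)
      ≤ ENNReal.ofReal (r n)}) atTop (nhds 1)) :
    ∀ b c : ℕ → ℝ, (∀ n, 0 < b n) → (∀ n, 0 < c n) → (∀ n, r n ≤ b n * c n) →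
      ∃ B C : ∀ n, Set (Θ n), (∀ n, MeasurableSet (B n)) ∧ (∀ n, MeasurableSet (C n)) ∧
        -- (A1)
        (∀ n, A n ∪ B n ∪ C n = Set.univ) ∧
        -- (A2)
        (∀ n, Mfun lam prior q n Set.univ (B n) / Mfun lam prior q n Set.univ Set.univ
          ≤ ENNReal.ofReal (b n)) ∧
        -- (A3)
        (∃ S : ∀ n, Set (χ n), (∀ n, MeasurableSet (S n)) ∧
          Tendsto (fun n => P.map (X n) (S n)) atTop (nhds 0) ∧
          ∀ n, ∀ θ ∈ C n,
            Qfun lam q n (S n)ᶜ θ / Qfun lam q n Set.univ θ ≤ ENNReal.ofReal (c n)) :=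
  stmt_2_general P lam X hX prior hprior q hq A hAmeas r hr hconv
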